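/- Let c = sqrt(π/2). The set D = {z ∈ ℂ : |Re(z) − Im(z)| < c − (1/c)·Re(z)·Im(z)} equals the union of the three sets {z : |Re(z)| < c and |Im(z)| < c}, {z : Re(z) > c and Im(z) < −c}, and {z : Re(z) < −c and Im(z) > c}. -/

import Mathlib

/-!
Multiplying by `c > 0`, the two inequalities packed into `|x - y| < c - x y / c` factor as
`(c - x)(c + y) > 0` and `(c + x)(c - y) > 0`. Of the four ways for both products to be positive,
the one with all four factors negative would force `c < x < -c`; the other three are the three
pieces of the union.
-/

open Real

theorem abs_sub_lt_sub_mul_div_iff {c : ℝ} (hc : 0 < c) (x y : ℝ) :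
    |x - y| < c - 1 / c * x * y ↔ 0 < (c - x) * (c + y) ∧ 0 < (c + x) * (c - y) := by
  have hxy : c * (c - 1 / c * x * y) = c ^ 2 - x * y := by field_simp
  rw [abs_sub_lt_iff, ← mul_lt_mul_iff_right₀ hc, ← mul_lt_mul_iff_right₀ hc (b := y - x), hxy]
  constructor <;> rintro ⟨h₁, h₂⟩ <;> constructor <;> linarith

theorem sub_mul_add_pos_and_add_mul_sub_pos_iff {c : ℝ} (hc : 0 ≤ c) (x y : ℝ) :
    0 < (c - x) * (c + y) ∧ 0 < (c + x) * (c - y) ↔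
      (|x| < c ∧ |y| < c) ∨ (c < x ∧ y < -c) ∨ (x < -c ∧ c < y) := by
  simp only [mul_pos_iff, abs_lt]
  constructor
  · rintro ⟨⟨hx, hy⟩ | ⟨hx, hy⟩, ⟨hx', hy'⟩ | ⟨hx', hy'⟩⟩
    · exact .inl ⟨⟨by linarith, by linarith⟩, by linarith, by linarith⟩
    · exact .inr (.inr ⟨by linarith, by linarith⟩)
    · exact .inr (.inl ⟨by linarith, by linarith⟩)
    · linarith
  · rintro (⟨⟨hx, hx'⟩, hy, hy'⟩ | ⟨hx, hy⟩ | ⟨hx, hy⟩)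
    · exact ⟨.inl ⟨by linarith, by linarith⟩, .inl ⟨by linarith, by linarith⟩⟩
    · exact ⟨.inr ⟨by linarith, by linarith⟩, .inl ⟨by linarith, by linarith⟩⟩
    · exact ⟨.inl ⟨by linarith, by linarith⟩, .inr ⟨by linarith, by linarith⟩⟩

theorem region_D_decomposition :
    {z : ℂ | |z.re - z.im| < Real.sqrt (π / 2) -
        (1 / Real.sqrt (π / 2)) * z.re * z.im} =
      {z : ℂ | |z.re| < Real.sqrt (π / 2) ∧ |z.im| < Real.sqrt (π / 2)} ∪
      {z : ℂ | z.re > Real.sqrt (π / 2) ∧ z.im < -Real.sqrt (π / 2)} ∪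
      {z : ℂ | z.re < -Real.sqrt (π / 2) ∧ z.im > Real.sqrt (π / 2)} := by
  have hc : 0 < Real.sqrt (π / 2) := Real.sqrt_pos.mpr (by positivity)
  ext z
  simp only [Set.mem_ofPred_eq, Set.mem_union, gt_iff_lt, or_assoc]
  rw [abs_sub_lt_sub_mul_div_iff hc, sub_mul_add_pos_and_add_mul_sub_pos_iff hc.le]
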